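/- arXiv:2312.07011 — 7 statements merged into one kernel-verified Lean document; each statement's English description precedes it below -/
import Mathlib

section
/- Let M be a nonempty finite set and let p be a probability mass function on M × M whose second marginal is uniform, i.e. p₂(l) = 1/|M| for every l ∈ M. Then for every function g : M × M → ℝ, ∑_{(m,l)∈M×M} p(m,l)·( g(m,l) − log ∑_{l'∈M} exp g(m,l') ) + log |M| ≤ I(p); equivalently, the expected softmax cross-entropy loss satisfies L_CE(g) ≥ log |M| − I(p). -/
/-!
The critic `g` induces the model `q(m, l) = p₁(m) · softmax(g(m, ·))(l)`, a pmf on `M × M`.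
Since `p₂ ≡ 1 / |M|`, on the support of `p` the integrand of `I(p)` splits as
`log (p / (p₁ p₂)) = (g − log ∑ exp g) + log |M| + log (p / q)`,
so `I(p)` exceeds the left-hand side by the Kullback–Leibler divergence of `p` from `q`,
which is nonnegative by Gibbs' inequality.
-/

open Real Finset

namespace Finset

variable {ι : Type*} (s : Finset ι) {p q : ι → ℝ}

theorem sum_sub_sum_le_sum_mul_log_div (hp : ∀ i ∈ s, 0 < p i) (hq : ∀ i ∈ s, 0 < q i) :
    ∑ i ∈ s, p i - ∑ i ∈ s, q i ≤ ∑ i ∈ s, p i * log (p i / q i) := by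
  rw [← sum_sub_distrib]
  refine sum_le_sum fun i hi => ?_
  have hpi := hp i hi
  have hqi := hq i hi
  calc p i - q i = p i * (1 - (p i / q i)⁻¹) := by field_simp
    _ ≤ p i * log (p i / q i) :=
      mul_le_mul_of_nonneg_left (one_sub_inv_le_log_of_pos (div_pos hpi hqi)) hpi.le

theorem sum_filter_pos_mul (hp : ∀ i ∈ s, 0 ≤ p i) (f : ι → ℝ) :
    ∑ i ∈ s with 0 < p i, p i * f i = ∑ i ∈ s, p i * f i :=
  sum_filter_of_ne fun i hi h => (hp i hi).lt_of_ne' (left_ne_zero_of_mul h)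

theorem sum_filter_pos (hp : ∀ i ∈ s, 0 ≤ p i) : ∑ i ∈ s with 0 < p i, p i = ∑ i ∈ s, p i := by
  simpa using sum_filter_pos_mul s hp 1

theorem sum_sub_sum_le_sum_filter_mul_log_div (hp : ∀ i ∈ s, 0 ≤ p i) (hq : ∀ i ∈ s, 0 ≤ q i)
    (hpq : ∀ i ∈ s, 0 < p i → 0 < q i) :
    ∑ i ∈ s, p i - ∑ i ∈ s, q i ≤ ∑ i ∈ s with 0 < p i, p i * log (p i / q i) := by
  have hq_le : ∑ i ∈ s with 0 < p i, q i ≤ ∑ i ∈ s, q i :=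
    sum_le_sum_of_subset_of_nonneg (filter_subset _ _) fun i hi _ => hq i hi
  have h_support := sum_sub_sum_le_sum_mul_log_div (s.filter (0 < p ·))
    (fun i hi => (mem_filter.1 hi).2) fun i hi => hpq i (mem_filter.1 hi).1 (mem_filter.1 hi).2
  rw [sum_filter_pos s hp] at h_support
  linarith

end Finset

noncomputable def softmax {ι : Type*} [Fintype ι] (f : ι → ℝ) (i : ι) : ℝ :=
  exp (f i) / ∑ j, exp (f j)

section Softmax

variable {ι : Type*} [Fintype ι] [Nonempty ι] (f : ι → ℝ)

theorem sum_exp_pos : 0 < ∑ j, exp (f j) :=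
  sum_pos (fun _ _ => exp_pos _) univ_nonempty

theorem softmax_pos (i : ι) : 0 < softmax f i :=
  div_pos (exp_pos _) (sum_exp_pos f)

theorem sum_softmax : ∑ i, softmax f i = 1 := by
  simp only [softmax]
  rw [← sum_div, div_self (sum_exp_pos f).ne']

theorem log_softmax (i : ι) : log (softmax f i) = f i - log (∑ j, exp (f j)) := by
  rw [softmax, log_div (exp_pos _).ne' (sum_exp_pos f).ne', log_exp]

end Softmax

section SoftmaxModel

variable {α β : Type*} [Fintype β] {p : α × β → ℝ}

theorem sum_eq_one_of_sum_fst_eq_inv_card [Fintype α] [Nonempty β]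
    (hunif : ∀ b, ∑ a, p (a, b) = 1 / (Fintype.card β : ℝ)) : ∑ x, p x = 1 := by
  rw [Fintype.sum_prod_type_right, sum_congr rfl fun b _ => hunif b, sum_const, card_univ,
    nsmul_eq_mul, mul_one_div_cancel (Nat.cast_ne_zero.2 Fintype.card_ne_zero)]

theorem sum_snd_pos_of_pos (hp : ∀ x, 0 ≤ p x) {x : α × β} (hx : 0 < p x) :
    0 < ∑ b, p (x.1, b) :=
  sum_pos' (fun _ _ => hp _) ⟨x.2, mem_univ _, hx⟩

noncomputable def softmaxModel (p g : α × β → ℝ) (x : α × β) : ℝ :=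
  (∑ b, p (x.1, b)) * softmax (fun b => g (x.1, b)) x.2

variable [Nonempty β] (g : α × β → ℝ)

theorem sum_softmaxModel [Fintype α] : ∑ x, softmaxModel p g x = ∑ x, p x := by
  simp only [Fintype.sum_prod_type, softmaxModel, ← mul_sum, sum_softmax, mul_one]

theorem softmaxModel_nonneg (hp : ∀ x, 0 ≤ p x) (x : α × β) : 0 ≤ softmaxModel p g x :=
  mul_nonneg (sum_nonneg fun _ _ => hp _) (softmax_pos _ _).le

theorem softmaxModel_pos (hp : ∀ x, 0 ≤ p x) {x : α × β} (hx : 0 < p x) :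
    0 < softmaxModel p g x :=
  mul_pos (sum_snd_pos_of_pos hp hx) (softmax_pos _ _)

theorem log_div_mul_inv_card_eq (hp : ∀ x, 0 ≤ p x) {x : α × β} (hx : 0 < p x) :
    log (p x / ((∑ b, p (x.1, b)) * (1 / (Fintype.card β : ℝ))))
      = (g x - log (∑ b, exp (g (x.1, b)))) + log (Fintype.card β)
        + log (p x / softmaxModel p g x) := by
  have hp₁ := sum_snd_pos_of_pos hp hx
  have hcard : (Fintype.card β : ℝ) ≠ 0 := Nat.cast_ne_zero.2 Fintype.card_ne_zero
  rw [log_div hx.ne' (mul_pos hp₁ (by positivity)).ne', log_mul hp₁.ne' (by positivity),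
    log_div hx.ne' (softmaxModel_pos g hp hx).ne', softmaxModel,
    log_mul hp₁.ne' (softmax_pos _ _).ne', log_softmax, one_div, log_inv]
  ring

end SoftmaxModel

theorem softmax_crossEntropy_lower_bound_general
    {M : Type*} [Fintype M] [Nonempty M]
    (p : M × M → ℝ)
    (hp0 : ∀ x, 0 ≤ p x)
    (hunif : ∀ l : M, ∑ m : M, p (m, l) = 1 / (Fintype.card M : ℝ))
    (g : M × M → ℝ) :
    (∑ x : M × M, p x * (g x - Real.log (∑ l' : M, Real.exp (g (x.1, l')))))
        + Real.log (Fintype.card M)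
      ≤ ∑ x ∈ Finset.univ.filter (fun x : M × M => 0 < p x),
          p x * Real.log (p x /
            ((∑ b : M, p (x.1, b)) * (∑ a : M, p (a, x.2)))) := by
  set q := softmaxModel p g
  have hsum : ∑ x, p x = 1 := sum_eq_one_of_sum_fst_eq_inv_card hunif
  have hgibbs : 0 ≤ ∑ x with 0 < p x, p x * log (p x / q x) := by
    have := sum_sub_sum_le_sum_filter_mul_log_div univ (fun x _ => hp0 x)
      (fun x _ => softmaxModel_nonneg g hp0 x) fun x _ hx => softmaxModel_pos g hp0 hx
    rwa [sum_softmaxModel, sub_self] at this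
  calc (∑ x, p x * (g x - log (∑ l', exp (g (x.1, l'))))) + log (Fintype.card M)
      ≤ ∑ x with 0 < p x, p x * (g x - log (∑ l', exp (g (x.1, l'))))
          + (∑ x with 0 < p x, p x) * log (Fintype.card M)
          + ∑ x with 0 < p x, p x * log (p x / q x) := by
        rw [sum_filter_pos_mul _ fun x _ => hp0 x, sum_filter_pos _ fun x _ => hp0 x, hsum,
          one_mul]
        exact le_add_of_nonneg_right hgibbs
    _ = _ := by
        rw [sum_mul, ← sum_add_distrib, ← sum_add_distrib]
        exact sum_congr rfl fun x hx => by
          rw [hunif, log_div_mul_inv_card_eq g hp0 (mem_filter.1 hx).2, mul_add, mul_add]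

/-- For a pmf `p` on `M × M` with uniform second marginal, for every
critic `g`, the shifted negative softmax cross-entropy is a lower bound on the mutual
information `I(p)`; equivalently `L_CE(g) ≥ log |M| − I(p)`. -/
theorem softmax_crossEntropy_lower_bound
    {M : Type*} [Fintype M] [Nonempty M]
    (p : M × M → ℝ)
    (hp0 : ∀ x, 0 ≤ p x)
    (hp1 : ∑ x : M × M, p x = 1)
    (hunif : ∀ l : M, ∑ m : M, p (m, l) = 1 / (Fintype.card M : ℝ))
    (g : M × M → ℝ) :
    (∑ x : M × M, p x * (g x - Real.log (∑ l' : M, Real.exp (g (x.1, l')))))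
        + Real.log (Fintype.card M)
      ≤ ∑ x ∈ Finset.univ.filter (fun x : M × M => 0 < p x),
          p x * Real.log (p x /
            ((∑ b : M, p (x.1, b)) * (∑ a : M, p (a, x.2)))) :=
  softmax_crossEntropy_lower_bound_general p hp0 hunif g
end

section
/- Let M be a nonempty finite set and let p be a probability mass function on M × M with p(m,l) > 0 for all (m,l), whose second marginal is uniform, i.e. p₂(l) = 1/|M| for every l ∈ M. Then the critic g(m,l) = log p(m,l) achieves equality in the softmax cross-entropy bound: L_CE(g) = log |M| − I(p). -/
/-- For a strictly positive pmf `p` on `M × M` with uniform second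
marginal, the critic `g(m,l) = log p(m,l)` achieves equality in the softmax
cross-entropy bound: `L_CE(g) = log |M| − I(p)`. -/
theorem softmax_crossEntropy_equality_at_log_p
    {M : Type*} [Fintype M] [Nonempty M]
    (p : M × M → ℝ)
    (hppos : ∀ x, 0 < p x)
    (hp1 : ∑ x : M × M, p x = 1)
    (hunif : ∀ l : M, ∑ m : M, p (m, l) = 1 / (Fintype.card M : ℝ)) :
    -(∑ x : M × M, p x *
        (Real.log (p x) - Real.log (∑ l' : M, Real.exp (Real.log (p (x.1, l'))))))
      = Real.log (Fintype.card M)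
        - ∑ x ∈ Finset.univ.filter (fun x : M × M => 0 < p x),
            p x * Real.log (p x /
              ((∑ b : M, p (x.1, b)) * (∑ a : M, p (a, x.2)))) := by
  have hN : (0:ℝ) < (Fintype.card M : ℝ) := by
    exact_mod_cast Fintype.card_pos
  have hS1 : ∀ m : M, 0 < ∑ b : M, p (m, b) := fun m =>
    Finset.sum_pos (fun b _ => hppos _) Finset.univ_nonempty
  have hfilter : Finset.univ.filter (fun x : M × M => 0 < p x) = Finset.univ :=
    Finset.filter_true_of_mem (fun x _ => hppos x)
  rw [hfilter]
  have hexp : ∀ x : M × M,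
      (∑ l' : M, Real.exp (Real.log (p (x.1, l')))) = ∑ l' : M, p (x.1, l') := by
    intro x
    exact Finset.sum_congr rfl fun l' _ => Real.exp_log (hppos _)
  have hterm : ∀ x : M × M,
      p x * Real.log (p x / ((∑ b : M, p (x.1, b)) * (∑ a : M, p (a, x.2))))
      = p x * (Real.log (p x) - Real.log (∑ b : M, p (x.1, b))
          + Real.log (Fintype.card M)) := by
    intro x
    rw [hunif x.2,
      Real.log_div (ne_of_gt (hppos x))
        (ne_of_gt (mul_pos (hS1 x.1) (by positivity))),
      Real.log_mul (ne_of_gt (hS1 x.1)) (by positivity),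
      Real.log_div one_ne_zero (ne_of_gt hN), Real.log_one]
    ring
  have hexp' : ∀ (m l' : M), Real.exp (Real.log (p (m, l'))) = p (m, l') :=
    fun m l' => Real.exp_log (hppos _)
  simp only [hexp']
  rw [Finset.sum_congr rfl (fun x _ => hterm x)]
  simp only [mul_add, mul_sub, Finset.sum_add_distrib, Finset.sum_sub_distrib,
    ← Finset.sum_mul, hp1]
  ring
end

section
/- (Theorem 1) Let M be a nonempty finite set and let p be a probability mass function on M × M with p(m,l) > 0 for all (m,l), whose second marginal is uniform, i.e. p₂(l) = 1/|M| for every l ∈ M. Then the infimum over all critics g : M × M → ℝ of the expected softmax cross-entropy loss equals the mutual information up to the constant log |M|: ⨅_{g : M×M→ℝ} L_CE(g) = log |M| − I(p). -/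
/-!
Write `p₁` for the first marginal. For every `m`, the weights `l ↦ exp g(m,l) / ∑ₗ' exp g(m,l')`
form a probability vector, so Gibbs' inequality gives `L_CE(g) ≥ -∑ p log (p / p₁)`, the
conditional entropy of the second coordinate given the first; the critic `g = log p` attains it.
Since the second marginal is uniform, `I(p) = ∑ p log (p / p₁) + log |M|`.
-/

open Real Finset

theorem mul_log_sub_mul_log_div_le {w q W : ℝ} (hw : 0 ≤ w) (hq : 0 < q) (hwW : w ≤ W) :
    w * log q - w * log (w / W) ≤ q * W - w := by
  obtain rfl | hw := hw.eq_or_lt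
  · simpa using mul_nonneg hq.le hwW
  have hW : 0 < W := hw.trans_le hwW
  calc w * log q - w * log (w / W) = w * log (q * W / w) := by
        rw [log_div (by positivity) hw.ne', log_mul hq.ne' hW.ne', log_div hw.ne' hW.ne']
        ring
    _ ≤ w * (q * W / w - 1) := by gcongr; exact log_le_sub_one_of_pos (by positivity)
    _ = q * W - w := by field_simp

theorem sum_mul_log_le_sum_mul_log_div_sum {ι : Type*} [Fintype ι] {w q : ι → ℝ}
    (hw : ∀ i, 0 ≤ w i) (hq : ∀ i, 0 < q i) (hq1 : ∑ i, q i ≤ 1) :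
    ∑ i, w i * log (q i) ≤ ∑ i, w i * log (w i / ∑ j, w j) := by
  have hW : 0 ≤ ∑ j, w j := sum_nonneg fun j _ => hw j
  have hterm : ∀ i, w i * log (q i) - w i * log (w i / ∑ j, w j) ≤ q i * ∑ j, w j - w i :=
    fun i => mul_log_sub_mul_log_div_le (hw i) (hq i)
      (single_le_sum (fun j _ => hw j) (mem_univ i))
  have hsum := sum_le_sum fun i (_ : i ∈ univ) => hterm i
  rw [sum_sub_distrib, sum_sub_distrib, ← sum_mul] at hsum
  nlinarith

theorem sub_log_sum_exp_eq_log_softmax {ι : Type*} [Fintype ι] (g : ι → ℝ) (i : ι) :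
    g i - log (∑ j, exp (g j)) = log (exp (g i) / ∑ j, exp (g j)) := by
  have hZ : 0 < ∑ j, exp (g j) := sum_pos (fun j _ => exp_pos _) ⟨i, mem_univ i⟩
  rw [log_div (exp_pos _).ne' hZ.ne', log_exp]

theorem sum_softmax_eq_one {ι : Type*} [Fintype ι] [Nonempty ι] (g : ι → ℝ) :
    ∑ i, exp (g i) / ∑ j, exp (g j) = 1 := by
  rw [← sum_div, div_self (sum_pos (fun j _ => exp_pos _) univ_nonempty).ne']

theorem sum_mul_sub_log_sum_exp_le {ι : Type*} [Fintype ι] {w : ι → ℝ} (hw : ∀ i, 0 ≤ w i)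
    (g : ι → ℝ) :
    ∑ i, w i * (g i - log (∑ j, exp (g j))) ≤ ∑ i, w i * log (w i / ∑ j, w j) := by
  cases isEmpty_or_nonempty ι
  · simp
  simp_rw [sub_log_sum_exp_eq_log_softmax g]
  refine sum_mul_log_le_sum_mul_log_div_sum hw (fun i => ?_) (sum_softmax_eq_one g).le
  exact div_pos (exp_pos _) (sum_pos (fun j _ => exp_pos _) univ_nonempty)

theorem sum_mul_sub_log_sum_exp_log {ι : Type*} [Fintype ι] {w : ι → ℝ} (hw : ∀ i, 0 < w i) :
    ∑ i, w i * (log (w i) - log (∑ j, exp (log (w j)))) = ∑ i, w i * log (w i / ∑ j, w j) := by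
  refine sum_congr rfl fun i _ => ?_
  have hW : 0 < ∑ j, w j := sum_pos (fun j _ => hw j) ⟨i, mem_univ i⟩
  simp_rw [exp_log (hw _), log_div (hw i).ne' hW.ne']

section CrossEntropy

variable {α β : Type*} [Fintype α] [Fintype β]

theorem sum_prod_mul_sub_log_sum_exp_le {p : α × β → ℝ} (hp : ∀ x, 0 ≤ p x)
    (g : α × β → ℝ) :
    ∑ x, p x * (g x - log (∑ b, exp (g (x.1, b))))
      ≤ ∑ x, p x * log (p x / ∑ b, p (x.1, b)) := by
  simp only [Fintype.sum_prod_type]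
  exact sum_le_sum fun a _ =>
    sum_mul_sub_log_sum_exp_le (fun b => hp (a, b)) fun b => g (a, b)

theorem iInf_neg_sum_mul_sub_log_sum_exp {p : α × β → ℝ} (hp : ∀ x, 0 < p x) :
    ⨅ g : α × β → ℝ, -∑ x, p x * (g x - log (∑ b, exp (g (x.1, b))))
      = -∑ x, p x * log (p x / ∑ b, p (x.1, b)) := by
  have hlb : ∀ g : α × β → ℝ, -∑ x, p x * log (p x / ∑ b, p (x.1, b))
      ≤ -∑ x, p x * (g x - log (∑ b, exp (g (x.1, b)))) :=
    fun g => neg_le_neg (sum_prod_mul_sub_log_sum_exp_le (fun x => (hp x).le) g)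
  have hattain : -∑ x, p x * (log (p x) - log (∑ b, exp (log (p (x.1, b)))))
      = -∑ x, p x * log (p x / ∑ b, p (x.1, b)) := by
    simp only [Fintype.sum_prod_type]
    exact congrArg _ (sum_congr rfl fun a _ => sum_mul_sub_log_sum_exp_log fun b => hp (a, b))
  refine le_antisymm ?_ (le_ciInf hlb)
  exact (ciInf_le ⟨_, Set.forall_mem_range.2 hlb⟩ fun x => log (p x)).trans_eq hattain

theorem sum_mul_log_div_marginals_of_snd_uniform {p : α × β → ℝ} (hp : ∀ x, 0 < p x)
    (hp1 : ∑ x, p x = 1) (hunif : ∀ b, ∑ a, p (a, b) = 1 / (Fintype.card β : ℝ)) :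
    ∑ x, p x * log (p x / ((∑ b, p (x.1, b)) * ∑ a, p (a, x.2)))
      = ∑ x, p x * log (p x / ∑ b, p (x.1, b)) + log (Fintype.card β) := by
  have hterm : ∀ x : α × β, p x * log (p x / ((∑ b, p (x.1, b)) * ∑ a, p (a, x.2)))
      = p x * log (p x / ∑ b, p (x.1, b)) + p x * log (Fintype.card β) := by
    intro x
    have hN : (0 : ℝ) < Fintype.card β := by
      exact_mod_cast Fintype.card_pos_iff.2 ⟨x.2⟩
    have hrow : 0 < ∑ b, p (x.1, b) := sum_pos (fun b _ => hp _) ⟨x.2, mem_univ _⟩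
    rw [hunif, div_mul_eq_div_div, div_div_eq_mul_div, div_one,
      log_mul (div_pos (hp x) hrow).ne' hN.ne']
    ring
  rw [sum_congr rfl fun x _ => hterm x, sum_add_distrib, ← sum_mul, hp1, one_mul]

end CrossEntropy

theorem iInf_softmax_crossEntropy_eq_log_card_sub_mutualInfo_general
    {M : Type*} [Fintype M]
    (p : M × M → ℝ)
    (hppos : ∀ x, 0 < p x)
    (hp1 : ∑ x : M × M, p x = 1)
    (hunif : ∀ l : M, ∑ m : M, p (m, l) = 1 / (Fintype.card M : ℝ)) :
    (⨅ g : M × M → ℝ,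
        -(∑ x : M × M, p x * (g x - Real.log (∑ l' : M, Real.exp (g (x.1, l'))))))
      = Real.log (Fintype.card M)
        - ∑ x ∈ Finset.univ.filter (fun x : M × M => 0 < p x),
            p x * Real.log (p x /
              ((∑ b : M, p (x.1, b)) * (∑ a : M, p (a, x.2)))) := by
  rw [iInf_neg_sum_mul_sub_log_sum_exp hppos, filter_true_of_mem fun x _ => hppos x,
    sum_mul_log_div_marginals_of_snd_uniform hppos hp1 hunif]
  ring

/-- **Theorem 1.** For a strictly positive pmf `p` on `M × M` with uniform
second marginal, the infimum over all critics `g : M × M → ℝ` of the expected softmax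
cross-entropy loss equals `log |M| − I(p)`. -/
theorem iInf_softmax_crossEntropy_eq_log_card_sub_mutualInfo
    {M : Type*} [Fintype M] [Nonempty M]
    (p : M × M → ℝ)
    (hppos : ∀ x, 0 < p x)
    (hp1 : ∑ x : M × M, p x = 1)
    (hunif : ∀ l : M, ∑ m : M, p (m, l) = 1 / (Fintype.card M : ℝ)) :
    (⨅ g : M × M → ℝ,
        -(∑ x : M × M, p x * (g x - Real.log (∑ l' : M, Real.exp (g (x.1, l'))))))
      = Real.log (Fintype.card M)
        - ∑ x ∈ Finset.univ.filter (fun x : M × M => 0 < p x),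
            p x * Real.log (p x /
              ((∑ b : M, p (x.1, b)) * (∑ a : M, p (a, x.2)))) :=
  iInf_softmax_crossEntropy_eq_log_card_sub_mutualInfo_general p hppos hp1 hunif
end

section
/- Let M be a nonempty finite set and let p be a probability mass function on M × M whose second marginal is uniform, i.e. p₂(l) = 1/|M| for every l ∈ M. For any critic g : M × M → ℝ, the gap between the mutual information and the shifted negative cross-entropy equals an average conditional KL divergence to the softmax distribution: I(p) − ( −L_CE(g) + log |M| ) = ∑_{m : p₁(m)>0} p₁(m) · D( p(·|m) ‖ softmax_l g(m,l) ), where p(l|m) = p(m,l)/p₁(m) and softmax_l g(m,l) = exp g(m,l) / ∑_{l'∈M} exp g(m,l'). -/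
/-- For a pmf `p` on `M × M` with uniform second marginal and any critic
`g`, the gap between the mutual information `I(p)` and the shifted negative cross-entropy
`−L_CE(g) + log |M|` equals the average (over the first marginal) conditional KL
divergence of `p(·|m)` to the softmax distribution `softmax_l g(m,l)`. -/
theorem mutualInfo_sub_shifted_negCrossEntropy_eq_avg_condKL
    {M : Type*} [Fintype M] [Nonempty M]
    (p : M × M → ℝ)
    (hp0 : ∀ x, 0 ≤ p x)
    (hp1 : ∑ x : M × M, p x = 1)
    (hunif : ∀ l : M, ∑ m : M, p (m, l) = 1 / (Fintype.card M : ℝ))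
    (g : M × M → ℝ) :
    (∑ x ∈ Finset.univ.filter (fun x : M × M => 0 < p x),
        p x * Real.log (p x / ((∑ b : M, p (x.1, b)) * (∑ a : M, p (a, x.2)))))
      - ((∑ x : M × M, p x * (g x - Real.log (∑ l' : M, Real.exp (g (x.1, l')))))
          + Real.log (Fintype.card M))
      = ∑ m ∈ Finset.univ.filter (fun m : M => 0 < ∑ b : M, p (m, b)),
          (∑ b : M, p (m, b)) *
            ∑ l ∈ Finset.univ.filter
                (fun l : M => 0 < p (m, l) / (∑ b : M, p (m, b))),
              (p (m, l) / (∑ b : M, p (m, b))) *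
                Real.log ((p (m, l) / (∑ b : M, p (m, b))) /
                  (Real.exp (g (m, l)) / (∑ l' : M, Real.exp (g (m, l'))))) := by
  classical
  set K : ℝ := (Fintype.card M : ℝ) with hKdef
  have hK : 0 < K := by
    rw [hKdef]
    exact_mod_cast Fintype.card_pos (α := M)
  set p1 : M → ℝ := fun m => ∑ b : M, p (m, b) with hp1d
  set Z : M → ℝ := fun m => ∑ l' : M, Real.exp (g (m, l')) with hZd
  have hp1' : ∀ m, (∑ b : M, p (m, b)) = p1 m := fun m => rfl
  have hZ' : ∀ m, (∑ l' : M, Real.exp (g (m, l'))) = Z m := fun m => rfl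
  simp only [hp1', hZ']
  have hp1nn : ∀ m, 0 ≤ p1 m := fun m => Finset.sum_nonneg fun _ _ => hp0 _
  have hple : ∀ m l, p (m, l) ≤ p1 m := fun m l =>
    Finset.single_le_sum (f := fun b => p (m, b)) (fun b _ => hp0 _) (Finset.mem_univ l)
  have hZpos : ∀ m, 0 < Z m := fun m =>
    Finset.sum_pos (fun _ _ => Real.exp_pos _) Finset.univ_nonempty
  have hp1zero : ∀ m, ¬ 0 < p1 m → ∀ l, p (m, l) = 0 := by
    intro m hm l
    have h1 := hple m l
    have h2 := hp0 (m, l)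
    push_neg at hm
    linarith
  have hsum_filter : ∑ x ∈ Finset.univ.filter (fun x : M × M => 0 < p x), p x = 1 := by
    rw [← hp1]
    refine Finset.sum_subset (Finset.filter_subset _ _) ?_
    intro x _ hx
    simp only [Finset.mem_filter, Finset.mem_univ, true_and, not_lt] at hx
    linarith [hp0 x]
  have hI : (∑ x ∈ Finset.univ.filter (fun x : M × M => 0 < p x),
        p x * Real.log (p x / (p1 x.1 * (∑ a : M, p (a, x.2)))))
      = (∑ x ∈ Finset.univ.filter (fun x : M × M => 0 < p x),
          p x * Real.log (p x / p1 x.1)) + Real.log K := by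
    have step : ∀ x ∈ Finset.univ.filter (fun x : M × M => 0 < p x),
        p x * Real.log (p x / (p1 x.1 * (∑ a : M, p (a, x.2))))
        = p x * Real.log (p x / p1 x.1) + p x * Real.log K := by
      intro x hx
      rw [Finset.mem_filter] at hx
      have hpx := hx.2
      have hp1pos : 0 < p1 x.1 := lt_of_lt_of_le hpx (hple x.1 x.2)
      rw [hunif x.2]
      have harg : p x / (p1 x.1 * (1 / K)) = (p x / p1 x.1) * K := by
        field_simp
      rw [harg, Real.log_mul (ne_of_gt (div_pos hpx hp1pos)) (ne_of_gt hK), mul_add]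
    rw [Finset.sum_congr rfl step, Finset.sum_add_distrib, ← Finset.sum_mul, hsum_filter,
      one_mul]
  have hCE : (∑ x : M × M, p x * (g x - Real.log (Z x.1)))
      = ∑ x ∈ Finset.univ.filter (fun x : M × M => 0 < p x),
          p x * (g x - Real.log (Z x.1)) := by
    symm
    refine Finset.sum_subset (Finset.filter_subset _ _) ?_
    intro x _ hx
    simp only [Finset.mem_filter, Finset.mem_univ, true_and, not_lt] at hx
    have hx0 : p x = 0 := le_antisymm hx (hp0 x)
    rw [hx0, zero_mul]
  have hRHS :
      (∑ m ∈ Finset.univ.filter (fun m : M => 0 < p1 m),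
          p1 m * ∑ l ∈ Finset.univ.filter (fun l : M => 0 < p (m, l) / p1 m),
            (p (m, l) / p1 m) * Real.log ((p (m, l) / p1 m) / (Real.exp (g (m, l)) / Z m)))
      = ∑ x ∈ Finset.univ.filter (fun x : M × M => 0 < p x),
          p x * (Real.log (p x / p1 x.1) - (g x - Real.log (Z x.1))) := by
    have hL : (∑ m ∈ Finset.univ.filter (fun m : M => 0 < p1 m),
          p1 m * ∑ l ∈ Finset.univ.filter (fun l : M => 0 < p (m, l) / p1 m),
            (p (m, l) / p1 m) * Real.log ((p (m, l) / p1 m) / (Real.exp (g (m, l)) / Z m)))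
        = ∑ m : M,
          p1 m * ∑ l ∈ Finset.univ.filter (fun l : M => 0 < p (m, l) / p1 m),
            (p (m, l) / p1 m) * Real.log ((p (m, l) / p1 m) / (Real.exp (g (m, l)) / Z m)) := by
      refine Finset.sum_subset (Finset.filter_subset _ _) ?_
      intro m _ hm
      simp only [Finset.mem_filter, Finset.mem_univ, true_and, not_lt] at hm
      have h0 : p1 m = 0 := le_antisymm hm (hp1nn m)
      rw [h0, zero_mul]
    have hR : (∑ x ∈ Finset.univ.filter (fun x : M × M => 0 < p x),
          p x * (Real.log (p x / p1 x.1) - (g x - Real.log (Z x.1))))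
        = ∑ m : M, ∑ l : M, (if 0 < p (m, l) then
            p (m, l) * (Real.log (p (m, l) / p1 m) - (g (m, l) - Real.log (Z m))) else 0) := by
      rw [Finset.sum_filter, Fintype.sum_prod_type]
    rw [hL, hR]
    refine Finset.sum_congr rfl fun m _ => ?_
    by_cases hm : 0 < p1 m
    · have hfilter_eq : Finset.univ.filter (fun l : M => 0 < p (m, l) / p1 m)
          = Finset.univ.filter (fun l : M => 0 < p (m, l)) := by
        refine Finset.filter_congr fun l _ => ?_
        constructor
        · intro h
          by_contra hc
          push_neg at hc
          have h0 : p (m, l) = 0 := le_antisymm hc (hp0 _)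
          rw [h0, zero_div] at h
          exact lt_irrefl _ h
        · intro h; exact div_pos h hm
      rw [hfilter_eq, Finset.mul_sum, Finset.sum_filter]
      refine Finset.sum_congr rfl fun l _ => ?_
      by_cases hl : 0 < p (m, l)
      · simp only [hl, if_true]
        have hcan : p1 m * (p (m, l) / p1 m) = p (m, l) := by
          field_simp
        rw [← mul_assoc, hcan]
        congr 1
        rw [Real.log_div (ne_of_gt (div_pos hl hm))
            (ne_of_gt (div_pos (Real.exp_pos _) (hZpos m))),
          Real.log_div (Real.exp_ne_zero _) (ne_of_gt (hZpos m)), Real.log_exp]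
      · have h0 : p (m, l) = 0 := le_antisymm (not_lt.mp hl) (hp0 _)
        simp [h0, hl]
    · have h0 : p1 m = 0 := le_antisymm (not_lt.mp hm) (hp1nn m)
      rw [h0, zero_mul]
      symm
      refine Finset.sum_eq_zero fun l _ => ?_
      have h00 : p (m, l) = 0 := hp1zero m hm l
      simp [h00]
  rw [hI, hCE, hRHS]
  have split : ∑ x ∈ Finset.univ.filter (fun x : M × M => 0 < p x),
      p x * (Real.log (p x / p1 x.1) - (g x - Real.log (Z x.1)))
      = (∑ x ∈ Finset.univ.filter (fun x : M × M => 0 < p x),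
          p x * Real.log (p x / p1 x.1))
        - ∑ x ∈ Finset.univ.filter (fun x : M × M => 0 < p x),
            p x * (g x - Real.log (Z x.1)) := by
    rw [← Finset.sum_sub_distrib]
    exact Finset.sum_congr rfl fun x _ => by ring
  rw [split]
  ring
end

section
/- (Donsker–Varadhan lower bound, finite case) Let Ω be a nonempty finite set and let p, q be probability mass functions on Ω with q(ω) > 0 whenever p(ω) > 0. Then for every function f : Ω → ℝ, ∑_{ω∈Ω} p(ω)·f(ω) − log( ∑_{ω∈Ω} q(ω)·exp f(ω) ) ≤ D(p‖q). -/
/-!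
Restricted to the support `s` of `p`, the left-hand side minus `D(p‖q)` is
`∑_{ω ∈ s} p ω · log (q ω · exp (f ω) / p ω) - log Z` with `Z = ∑ q · exp f`. Jensen's inequality for
the concave logarithm, with the weights `p` on `s`, bounds the sum by `log ∑_{ω ∈ s} q ω · exp (f ω)`,
which is at most `log Z`.
-/

open Real Finset

theorem Real.sum_mul_log_div_le_log_sum {ι : Type*} (s : Finset ι) {w a : ι → ℝ}
    (hw : ∀ i ∈ s, 0 < w i) (hw1 : ∑ i ∈ s, w i = 1) (ha : ∀ i ∈ s, 0 < a i) :
    ∑ i ∈ s, w i * log (a i / w i) ≤ log (∑ i ∈ s, a i) := by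
  have jensen := strictConcaveOn_log_Ioi.concaveOn.le_map_sum (t := s) (p := fun i => a i / w i)
    (fun i hi => (hw i hi).le) hw1 (fun i hi => div_pos (ha i hi) (hw i hi))
  have hwa : ∀ i ∈ s, w i * (a i / w i) = a i := fun i hi => mul_div_cancel₀ _ (hw i hi).ne'
  simpa only [smul_eq_mul, sum_congr rfl hwa] using jensen

theorem Real.mul_log_mul_exp_div {p q : ℝ} (hp : 0 < p) (hq : 0 < q) (x : ℝ) :
    p * log (q * exp x / p) = p * x - p * log (p / q) := by
  rw [log_div (by positivity) hp.ne', log_mul hq.ne' (exp_pos x).ne', log_exp,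
    log_div hp.ne' hq.ne']
  ring

theorem donsker_varadhan_lower_bound_general
    {Ω : Type*} [Fintype Ω]
    (p q : Ω → ℝ)
    (hp0 : ∀ ω, 0 ≤ p ω) (hp1 : ∑ ω : Ω, p ω = 1)
    (hq0 : ∀ ω, 0 ≤ q ω)
    (hqp : ∀ ω, 0 < p ω → 0 < q ω)
    (f : Ω → ℝ) :
    (∑ ω : Ω, p ω * f ω) - Real.log (∑ ω : Ω, q ω * Real.exp (f ω))
      ≤ ∑ ω ∈ Finset.univ.filter (fun ω : Ω => 0 < p ω),
          p ω * Real.log (p ω / q ω) := by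
  set s := univ.filter (fun ω : Ω => 0 < p ω)
  have hpos : ∀ ω ∈ s, 0 < p ω := fun ω hω => (mem_filter.1 hω).2
  have hqe : ∀ ω ∈ s, 0 < q ω * exp (f ω) := fun ω hω => by
    have := hqp ω (hpos ω hω); positivity
  have hpf : ∑ ω ∈ s, p ω * f ω = ∑ ω, p ω * f ω :=
    sum_filter_of_ne fun ω _ h => (hp0 ω).lt_of_ne' (left_ne_zero_of_mul h)
  have hps : ∑ ω ∈ s, p ω = 1 :=
    (sum_filter_of_ne fun ω _ h => (hp0 ω).lt_of_ne' h).trans hp1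
  have hs : s.Nonempty := nonempty_of_sum_ne_zero (by rw [hps]; exact one_ne_zero)
  have restrict_log_le : log (∑ ω ∈ s, q ω * exp (f ω)) ≤ log (∑ ω, q ω * exp (f ω)) :=
    log_le_log (sum_pos hqe hs) <| sum_le_sum_of_subset_of_nonneg (subset_univ s)
      fun ω _ _ => mul_nonneg (hq0 ω) (exp_pos _).le
  have gibbs := Real.sum_mul_log_div_le_log_sum s hpos hps hqe
  rw [sum_congr rfl fun ω hω => mul_log_mul_exp_div (hpos ω hω) (hqp ω (hpos ω hω)) (f ω),
    sum_sub_distrib, hpf] at gibbs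
  linarith

/-- **Donsker–Varadhan lower bound, finite case.** For pmfs `p, q` on a
nonempty finite set `Ω` with `q` positive wherever `p` is, for every `f : Ω → ℝ`,
`∑ p·f − log(∑ q·exp f) ≤ D(p‖q)`. -/
theorem donsker_varadhan_lower_bound
    {Ω : Type*} [Fintype Ω] [Nonempty Ω]
    (p q : Ω → ℝ)
    (hp0 : ∀ ω, 0 ≤ p ω) (hp1 : ∑ ω : Ω, p ω = 1)
    (hq0 : ∀ ω, 0 ≤ q ω) (hq1 : ∑ ω : Ω, q ω = 1)
    (hqp : ∀ ω, 0 < p ω → 0 < q ω)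
    (f : Ω → ℝ) :
    (∑ ω : Ω, p ω * f ω) - Real.log (∑ ω : Ω, q ω * Real.exp (f ω))
      ≤ ∑ ω ∈ Finset.univ.filter (fun ω : Ω => 0 < p ω),
          p ω * Real.log (p ω / q ω) :=
  donsker_varadhan_lower_bound_general p q hp0 hp1 hq0 hqp f
end

section
/- (Donsker–Varadhan representation, finite case) Let Ω be a nonempty finite set and let p, q be probability mass functions on Ω with p(ω) > 0 and q(ω) > 0 for all ω. Then the function f* = log(p/q) attains equality, ∑_ω p(ω)·f*(ω) − log( ∑_ω q(ω)·exp f*(ω) ) = D(p‖q), and consequently D(p‖q) = ⨆_{f : Ω → ℝ} ( ∑_ω p(ω)·f(ω) − log ∑_ω q(ω)·exp f(ω) ). -/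
/-!
Writing `∑ q e^f = ∑ p · (q e^f / p)`, Jensen's inequality for the concave logarithm with
weights `p` bounds `log ∑ q e^f` below by `∑ p f - ∑ p log (p / q)`. Equality holds at
`f = log (p / q)`, where `q e^f = p` and the logarithm term vanishes, so the Donsker–Varadhan
supremum is attained and equals `D(p‖q)`.
-/

open Finset Real

lemma sum_mul_sub_log_sum_mul_exp_le {Ω : Type*} [Fintype Ω] (p q : Ω → ℝ)
    (hp0 : ∀ ω, 0 < p ω) (hp1 : ∑ ω, p ω = 1) (hq0 : ∀ ω, 0 < q ω) (f : Ω → ℝ) :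
    (∑ ω, p ω * f ω) - log (∑ ω, q ω * exp (f ω)) ≤ ∑ ω, p ω * log (p ω / q ω) := by
  have hjensen := strictConcaveOn_log_Ioi.concaveOn.le_map_sum (t := univ) (w := p)
    (p := fun ω => q ω * exp (f ω) / p ω) (fun ω _ => (hp0 ω).le) hp1
    (fun ω _ => div_pos (mul_pos (hq0 ω) (exp_pos _)) (hp0 ω))
  have hweights : ∀ ω, p ω * (q ω * exp (f ω) / p ω) = q ω * exp (f ω) := fun ω =>
    mul_div_cancel₀ _ (hp0 ω).ne'
  have hlogs : ∀ ω, p ω * log (q ω * exp (f ω) / p ω)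
      = p ω * f ω - p ω * log (p ω / q ω) := fun ω => by
    rw [log_div (mul_pos (hq0 ω) (exp_pos _)).ne' (hp0 ω).ne', log_mul (hq0 ω).ne'
      (exp_pos _).ne', log_exp, log_div (hp0 ω).ne' (hq0 ω).ne']
    ring
  simp only [smul_eq_mul, hweights, hlogs, sum_sub_distrib] at hjensen
  linarith

lemma sum_mul_exp_log_div {Ω : Type*} [Fintype Ω] (p q : Ω → ℝ)
    (hp0 : ∀ ω, 0 < p ω) (hq0 : ∀ ω, 0 < q ω) :
    ∑ ω, q ω * exp (log (p ω / q ω)) = ∑ ω, p ω :=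
  sum_congr rfl fun ω _ => by
    rw [exp_log (div_pos (hp0 ω) (hq0 ω)), mul_div_cancel₀ _ (hq0 ω).ne']

theorem donsker_varadhan_representation_general
    {Ω : Type*} [Fintype Ω]
    (p q : Ω → ℝ)
    (hp0 : ∀ ω, 0 < p ω) (hp1 : ∑ ω : Ω, p ω = 1)
    (hq0 : ∀ ω, 0 < q ω) :
    ((∑ ω : Ω, p ω * Real.log (p ω / q ω))
        - Real.log (∑ ω : Ω, q ω * Real.exp (Real.log (p ω / q ω)))
      = ∑ ω ∈ Finset.univ.filter (fun ω : Ω => 0 < p ω),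
          p ω * Real.log (p ω / q ω))
    ∧ (∑ ω ∈ Finset.univ.filter (fun ω : Ω => 0 < p ω),
          p ω * Real.log (p ω / q ω))
        = ⨆ f : Ω → ℝ,
            ((∑ ω : Ω, p ω * f ω) - Real.log (∑ ω : Ω, q ω * Real.exp (f ω))) := by
  have hsupport : univ.filter (fun ω => 0 < p ω) = univ := filter_true_of_mem fun ω _ => hp0 ω
  have hattained : (∑ ω, p ω * log (p ω / q ω)) - log (∑ ω, q ω * exp (log (p ω / q ω)))
      = ∑ ω, p ω * log (p ω / q ω) := by
    rw [sum_mul_exp_log_div p q hp0 hq0, hp1, log_one, sub_zero]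
  rw [hsupport]
  refine ⟨hattained, ?_⟩
  have hgreatest : IsGreatest
      (Set.range fun f : Ω → ℝ => (∑ ω, p ω * f ω) - log (∑ ω, q ω * exp (f ω)))
      (∑ ω, p ω * log (p ω / q ω)) :=
    ⟨⟨fun ω => log (p ω / q ω), hattained⟩,
      Set.forall_mem_range.2 (sum_mul_sub_log_sum_mul_exp_le p q hp0 hp1 hq0)⟩
  exact hgreatest.csSup_eq.symm

/-- **Donsker–Varadhan representation, finite case.** For strictly positive
pmfs `p, q` on a nonempty finite set `Ω`, the function `f* = log(p/q)` attains equality in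
the Donsker–Varadhan bound, and consequently `D(p‖q)` equals the supremum over all
`f : Ω → ℝ` of `∑ p·f − log(∑ q·exp f)`. -/
theorem donsker_varadhan_representation
    {Ω : Type*} [Fintype Ω] [Nonempty Ω]
    (p q : Ω → ℝ)
    (hp0 : ∀ ω, 0 < p ω) (hp1 : ∑ ω : Ω, p ω = 1)
    (hq0 : ∀ ω, 0 < q ω) (hq1 : ∑ ω : Ω, q ω = 1) :
    ((∑ ω : Ω, p ω * Real.log (p ω / q ω))
        - Real.log (∑ ω : Ω, q ω * Real.exp (Real.log (p ω / q ω)))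
      = ∑ ω ∈ Finset.univ.filter (fun ω : Ω => 0 < p ω),
          p ω * Real.log (p ω / q ω))
    ∧ (∑ ω ∈ Finset.univ.filter (fun ω : Ω => 0 < p ω),
          p ω * Real.log (p ω / q ω))
        = ⨆ f : Ω → ℝ,
            ((∑ ω : Ω, p ω * f ω) - Real.log (∑ ω : Ω, q ω * Real.exp (f ω))) :=
  donsker_varadhan_representation_general p q hp0 hp1 hq0
end

section
/- (MINE lower bound, Eq. (25), finite case) Let X, Y be nonempty finite sets and let p be a probability mass function on X × Y with marginals p₁, p₂. Then for every function T : X × Y → ℝ, ∑_{(x,y)} p(x,y)·T(x,y) − log( ∑_{(x,y)} p₁(x)·p₂(y)·exp T(x,y) ) ≤ I(p). -/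
open Finset Real

/-- Jensen for `log`: weighted sum of logs is at most log of weighted sum. -/
lemma gibbs_aux {ι : Type*} (s : Finset ι) (w v : ι → ℝ)
    (hw : ∀ i ∈ s, 0 ≤ w i) (hw1 : ∑ i ∈ s, w i = 1)
    (hv : ∀ i ∈ s, 0 < v i) :
    ∑ i ∈ s, w i * Real.log (v i) ≤ Real.log (∑ i ∈ s, w i * v i) := by
  have := (strictConcaveOn_log_Ioi.concaveOn).le_map_sum hw hw1
    (p := v) (fun i hi => hv i hi)
  simpa [smul_eq_mul] using this

/-- **MINE lower bound, Eq. (25), finite case.** For a pmf `p` on a finite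
product `X × Y` with marginals `p₁, p₂`, every statistics network `T : X × Y → ℝ`
satisfies `∑ p·T − log(∑ p₁⊗p₂ · exp T) ≤ I(p)`. -/
theorem mine_lower_bound
    {X Y : Type*} [Fintype X] [Fintype Y] [Nonempty X] [Nonempty Y]
    (p : X × Y → ℝ)
    (hp0 : ∀ x, 0 ≤ p x) (hp1 : ∑ x : X × Y, p x = 1)
    (T : X × Y → ℝ) :
    (∑ x : X × Y, p x * T x)
        - Real.log (∑ x : X × Y,
            (∑ b : Y, p (x.1, b)) * (∑ a : X, p (a, x.2)) * Real.exp (T x))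
      ≤ ∑ x ∈ Finset.univ.filter (fun x : X × Y => 0 < p x),
          p x * Real.log (p x / ((∑ b : Y, p (x.1, b)) * (∑ a : X, p (a, x.2)))) := by
  classical
  set q : X × Y → ℝ := fun x => (∑ b : Y, p (x.1, b)) * (∑ a : X, p (a, x.2)) with hq
  set s : Finset (X × Y) := Finset.univ.filter (fun x : X × Y => 0 < p x) with hs
  have hmem : ∀ x : X × Y, x ∈ s ↔ 0 < p x := by
    intro x; simp [hs]
  -- q positive on s
  have hqpos : ∀ x ∈ s, 0 < q x := by
    intro x hx
    have hpx := (hmem x).1 hx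
    have h1 : 0 < ∑ b : Y, p (x.1, b) :=
      Finset.sum_pos' (fun b _ => hp0 _) ⟨x.2, Finset.mem_univ _, by simpa using hpx⟩
    have h2 : 0 < ∑ a : X, p (a, x.2) :=
      Finset.sum_pos' (fun a _ => hp0 _) ⟨x.1, Finset.mem_univ _, by simpa using hpx⟩
    exact mul_pos h1 h2
  have hs1 : ∑ x ∈ s, p x = 1 := by
    rw [← hp1, hs]
    apply Finset.sum_filter_of_ne
    intro x _ h
    exact lt_of_le_of_ne (hp0 x) (Ne.symm h)
  have hsne : s.Nonempty := by
    by_contra h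
    rw [Finset.not_nonempty_iff_eq_empty] at h
    simp [h] at hs1
  -- apply gibbs with v x = q x * exp (T x) / p x
  have key := gibbs_aux s p (fun x => q x * Real.exp (T x) / p x)
    (fun x _ => hp0 x) hs1
    (fun x hx => div_pos (mul_pos (hqpos x hx) (Real.exp_pos _)) ((hmem x).1 hx))
  have hsum_v : ∑ x ∈ s, p x * (q x * Real.exp (T x) / p x) = ∑ x ∈ s, q x * Real.exp (T x) := by
    apply Finset.sum_congr rfl
    intro x hx
    field_simp [((hmem x).1 hx).ne']
  have hZle : ∑ x ∈ s, q x * Real.exp (T x) ≤ ∑ x : X × Y, q x * Real.exp (T x) := by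
    apply Finset.sum_le_sum_of_subset_of_nonneg (Finset.filter_subset _ _)
    intro x _ _
    have : 0 ≤ q x := mul_nonneg (Finset.sum_nonneg fun _ _ => hp0 _)
      (Finset.sum_nonneg fun _ _ => hp0 _)
    positivity
  have hZpos : 0 < ∑ x ∈ s, q x * Real.exp (T x) :=
    Finset.sum_pos (fun x hx => mul_pos (hqpos x hx) (Real.exp_pos _)) hsne
  have hlog : Real.log (∑ x ∈ s, q x * Real.exp (T x))
      ≤ Real.log (∑ x : X × Y, q x * Real.exp (T x)) :=
    Real.log_le_log hZpos hZle
  -- expand logs in key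
  have hexp : ∑ x ∈ s, p x * Real.log (q x * Real.exp (T x) / p x)
      = ∑ x ∈ s, (p x * T x - p x * Real.log (p x / q x)) := by
    apply Finset.sum_congr rfl
    intro x hx
    have hpx := (hmem x).1 hx
    have hq' := hqpos x hx
    rw [Real.log_div (by positivity) hpx.ne', Real.log_mul hq'.ne' (Real.exp_ne_zero _),
      Real.log_exp, Real.log_div hpx.ne' hq'.ne']
    ring
  have hpT : ∑ x : X × Y, p x * T x = ∑ x ∈ s, p x * T x := by
    symm
    rw [hs]
    apply Finset.sum_filter_of_ne
    intro x _ h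
    rcases (hp0 x).lt_or_eq with h' | h'
    · exact h'
    · exact absurd (by rw [← h']; ring) h
  rw [hsum_v, hexp, Finset.sum_sub_distrib] at key
  have := key.trans hlog
  rw [hpT]
  linarith
end
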